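/- For any positive integers p and q and every real number x with 0 ≤ x ≤ 1/e, (∑_{k=0}^∞ (kp+q)^{k-1} q x^k/(p^k k!))^p = (∑_{k=0}^∞ (k+1)^{k-1} x^k / k!)^q, where each factor of the form a^{k-1} with k = 0 is interpreted as a^{-1} (so the k = 0 term of the first series is q·q^{-1} = 1 and that of the second series is 1). -/

import Mathlib

/-!
Write `A_n(a) = a (a + n)^(n-1)`, `A_0(a) = 1`. Abel's identity
`∑ C(n,k) A_k(a) (y - k)^(n-k) = (a + y)^n` holds because both sides have `y`-derivative `n` times
the case `n - 1`, and at `y = -a` the left side is `a` times an `n`-th forward difference of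
`r ↦ r^(n-1)`, hence zero. Since `A_m(b) = (b + m)^m - m (b + m)^(m-1)`, it yields the
convolution `∑ C(n,k) A_k(a) A_(n-k)(b) = A_n(a + b)`, i.e. `B_a B_b = B_(a+b)` for
`B_a(x) = ∑ A_n(a) x^n / n!` wherever these series converge absolutely. By Stirling the terms are
`O(n^(-3/2))` for `|x| ≤ 1/e`. Both series of the theorem are of this form, `B_(q/p)` and `B_1`,
and `B_(q/p)^p = B_q = B_1^q`.
-/

open Finset Real
open scoped Nat

noncomputable def abelCoeff (a : ℝ) : ℕ → ℝ
  | 0 => 1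
  | n + 1 => a * (a + n + 1) ^ n

lemma abelCoeff_mul_pow (a : ℝ) {k n : ℕ} (hk : k ≤ n + 1) :
    abelCoeff a k * (a + k) ^ (n + 1 - k) = a * (a + k) ^ n := by
  cases k with
  | zero => rw [abelCoeff, Nat.cast_zero, add_zero, one_mul, Nat.sub_zero, pow_succ']
  | succ j =>
    rw [abelCoeff, show n + 1 - (j + 1) = n - j by omega, Nat.cast_succ, ← add_assoc, mul_assoc,
      ← pow_add, Nat.add_sub_cancel' (by omega)]

lemma abelCoeff_eq_pow_sub (b : ℝ) (m : ℕ) :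
    abelCoeff b m = (b + m) ^ m - m * (b + m) ^ (m - 1) := by
  cases m with
  | zero => simp [abelCoeff]
  | succ m => rw [abelCoeff, Nat.add_sub_cancel, pow_succ]; push_cast; ring

noncomputable def abelSum (a y : ℝ) (n : ℕ) : ℝ :=
  ∑ k ∈ range (n + 1), n.choose k * abelCoeff a k * (y - k) ^ (n - k)

lemma sum_choose_mul_abelCoeff_mul_sub_mul_pow (a y : ℝ) (n : ℕ) :
    ∑ k ∈ range (n + 2), ((n + 1).choose k : ℝ) * abelCoeff a k *
        ((n + 1 - k : ℕ) * (y - k) ^ (n - k)) = (n + 1) * abelSum a y n := by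
  rw [sum_range_succ, Nat.sub_self, Nat.cast_zero, zero_mul, mul_zero, add_zero, abelSum, mul_sum]
  refine sum_congr rfl fun k _ => ?_
  have h := congrArg (Nat.cast : ℕ → ℝ) (Nat.choose_mul_succ_eq n k)
  push_cast at h
  linear_combination (-(abelCoeff a k * (y - k) ^ (n - k))) * h

lemma hasDerivAt_abelSum (a y : ℝ) (n : ℕ) :
    HasDerivAt (fun y => abelSum a y (n + 1)) ((n + 1) * abelSum a y n) y := by
  rw [← sum_choose_mul_abelCoeff_mul_sub_mul_pow]
  refine HasDerivAt.fun_sum fun k _ => ?_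
  refine ((((hasDerivAt_id y).sub_const (k : ℝ)).pow (n + 1 - k)).const_mul
    (((n + 1).choose k : ℝ) * abelCoeff a k)).congr_deriv ?_
  rw [show n + 1 - k - 1 = n - k by omega, mul_one, id]

lemma abelSum_neg_self (a : ℝ) (n : ℕ) : abelSum a (-a) (n + 1) = 0 := by
  have hΔ := congrFun (fwdDiff_iter_pow_eq_zero_of_lt (R := ℝ) (Nat.lt_succ_self n)) a
  rw [fwdDiff_iter_eq_sum_shift, Pi.zero_apply] at hΔ
  calc abelSum a (-a) (n + 1)
      = a * ∑ k ∈ range (n + 1 + 1),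
          ((-1 : ℤ) ^ (n + 1 - k) * ((n + 1).choose k : ℤ)) • (a + k • (1 : ℝ)) ^ n := by
        rw [abelSum, mul_sum]
        refine sum_congr rfl fun k hk => ?_
        have h := abelCoeff_mul_pow a (n := n) (Nat.lt_succ_iff.mp (mem_range.mp hk))
        rw [show -a - k = -(a + k) by ring, neg_pow, zsmul_eq_mul, nsmul_one]
        push_cast
        linear_combination ((n + 1).choose k * (-1 : ℝ) ^ (n + 1 - k)) * h
    _ = 0 := by rw [hΔ, mul_zero]

theorem abelSum_eq_add_pow (a y : ℝ) (n : ℕ) : abelSum a y n = (a + y) ^ n := by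
  induction n generalizing y with
  | zero => simp [abelSum, abelCoeff]
  | succ n ih =>
    have hderiv : ∀ y, HasDerivAt (fun y => abelSum a y (n + 1) - (a + y) ^ (n + 1)) 0 y := by
      intro y
      refine ((hasDerivAt_abelSum a y n).sub
        (((hasDerivAt_id y).const_add a).pow (n + 1))).congr_deriv ?_
      rw [ih, Nat.add_sub_cancel, id]; push_cast; ring
    have hconst := is_const_of_deriv_eq_zero (fun y => (hderiv y).differentiableAt)
      (fun y => (hderiv y).deriv) y (-a)
    simp only [abelSum_neg_self, add_neg_cancel, zero_pow (Nat.succ_ne_zero n), sub_zero] at hconst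
    exact sub_eq_zero.mp hconst

theorem sum_choose_mul_abelCoeff_mul_abelCoeff (a b : ℝ) (n : ℕ) :
    ∑ k ∈ range (n + 1), n.choose k * abelCoeff a k * abelCoeff b (n - k)
      = abelCoeff (a + b) n := by
  cases n with
  | zero => simp [abelCoeff]
  | succ n =>
    set y := b + n + 1
    have hterm : ∀ k ∈ range (n + 2),
        ((n + 1).choose k : ℝ) * abelCoeff a k * abelCoeff b (n + 1 - k)
          = (n + 1).choose k * abelCoeff a k * (y - k) ^ (n + 1 - k)
            - (n + 1).choose k * abelCoeff a k *
                ((n + 1 - k : ℕ) * (y - k) ^ (n - k)) := by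
      intro k hk
      have hy : b + ((n + 1 - k : ℕ) : ℝ) = y - k := by
        rw [Nat.cast_sub (Nat.lt_succ_iff.mp (mem_range.mp hk))]; push_cast; ring
      rw [abelCoeff_eq_pow_sub b, hy, show n + 1 - k - 1 = n - k by omega]
      ring
    rw [sum_congr rfl hterm, sum_sub_distrib, sum_choose_mul_abelCoeff_mul_sub_mul_pow]
    change abelSum a y (n + 1) - _ = _
    rw [abelSum_eq_add_pow, abelSum_eq_add_pow, abelCoeff, pow_succ]
    ring

lemma abelCoeff_nonneg {a : ℝ} (ha : 0 ≤ a) (n : ℕ) : 0 ≤ abelCoeff a n := by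
  cases n with
  | zero => exact zero_le_one
  | succ n => rw [abelCoeff]; positivity

lemma abelCoeff_succ_le {a : ℝ} (ha : 0 ≤ a) (n : ℕ) :
    abelCoeff a (n + 1) ≤ a * exp a * ((n : ℝ) + 1) ^ n := by
  have hN : (0 : ℝ) < n + 1 := by positivity
  have hbase : a + n + 1 ≤ (n + 1) * exp (a / (n + 1)) :=
    calc a + n + 1 = (n + 1) * (a / (n + 1) + 1) := by field_simp; ring
      _ ≤ (n + 1) * exp (a / (n + 1)) := by gcongr; exact add_one_le_exp _
  have hexp : exp (a / (n + 1)) ^ n ≤ exp a := by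
    rw [← exp_nat_mul, exp_le_exp, mul_div_assoc', div_le_iff₀ hN]
    nlinarith
  calc abelCoeff a (n + 1) = a * (a + n + 1) ^ n := rfl
    _ ≤ a * ((n + 1) * exp (a / (n + 1))) ^ n := by gcongr
    _ = a * ((n : ℝ) + 1) ^ n * exp (a / (n + 1)) ^ n := by rw [mul_pow]; ring
    _ ≤ a * ((n : ℝ) + 1) ^ n * exp a := by gcongr
    _ = a * exp a * ((n : ℝ) + 1) ^ n := by ring

lemma abelCoeff_mul_exp_neg_div_factorial_le {a : ℝ} (ha : 0 ≤ a) (n : ℕ) :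
    abelCoeff a (n + 1) * exp (-1) ^ (n + 1) / (n + 1)! ≤
      a * exp a * (((n + 1 : ℕ) : ℝ) ^ (3 / 2 : ℝ))⁻¹ := by
  set N : ℝ := ((n + 1 : ℕ) : ℝ)
  have hN : 0 < N := by positivity
  have hfact : √N * (N ^ (n + 1) * exp (-1) ^ (n + 1)) ≤ (n + 1)! := by
    refine le_trans ?_ (Stirling.le_factorial_stirling (n + 1))
    rw [div_eq_mul_inv, mul_pow, ← exp_neg]
    gcongr
    nlinarith [pi_gt_three]
  have hpow : N ^ (3 / 2 : ℝ) = N * √N := by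
    rw [show (3 / 2 : ℝ) = 1 + 1 / 2 by norm_num, rpow_add hN, rpow_one, sqrt_eq_rpow]
  calc abelCoeff a (n + 1) * exp (-1) ^ (n + 1) / (n + 1)!
      ≤ a * exp a * N ^ n * exp (-1) ^ (n + 1) / (√N * (N ^ (n + 1) * exp (-1) ^ (n + 1))) := by
        gcongr
        exact (abelCoeff_succ_le ha n).trans_eq (by simp [N])
    _ = a * exp a * (N ^ (3 / 2 : ℝ))⁻¹ := by
        rw [hpow]
        field_simp
        ring

lemma summable_norm_abelCoeff_mul_pow_div_factorial {a x : ℝ} (ha : 0 ≤ a)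
    (hx : |x| ≤ exp (-1)) :
    Summable fun n => ‖abelCoeff a n * x ^ n / (n !)‖ := by
  have hbound : Summable fun n : ℕ => a * exp a * (((n + 1 : ℕ) : ℝ) ^ (3 / 2 : ℝ))⁻¹ :=
    ((summable_nat_add_iff 1).mpr (summable_nat_rpow_inv.mpr (by norm_num))).mul_left _
  refine (summable_nat_add_iff 1).mp (hbound.of_nonneg_of_le (fun _ => norm_nonneg _) fun n => ?_)
  refine le_trans ?_ (abelCoeff_mul_exp_neg_div_factorial_le ha n)
  rw [norm_div, norm_mul, norm_pow, Real.norm_of_nonneg (abelCoeff_nonneg ha _), Real.norm_eq_abs,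
    RCLike.norm_natCast]
  gcongr
  exact abelCoeff_nonneg ha _

noncomputable def abelSeries (a x : ℝ) : ℝ := ∑' n, abelCoeff a n * x ^ n / n !

lemma abelSeries_zero (x : ℝ) : abelSeries 0 x = 1 := by
  rw [abelSeries, tsum_eq_single 0]
  · simp [abelCoeff]
  · rintro (_ | n) hn
    · exact absurd rfl hn
    · simp [abelCoeff]

lemma abelSeries_mul {a b x : ℝ} (ha : 0 ≤ a) (hb : 0 ≤ b) (hx : |x| ≤ exp (-1)) :
    abelSeries a x * abelSeries b x = abelSeries (a + b) x := by
  rw [abelSeries, abelSeries, tsum_mul_tsum_eq_tsum_sum_range_of_summable_norm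
    (summable_norm_abelCoeff_mul_pow_div_factorial ha hx)
    (summable_norm_abelCoeff_mul_pow_div_factorial hb hx), abelSeries]
  refine tsum_congr fun n => ?_
  rw [← sum_choose_mul_abelCoeff_mul_abelCoeff, sum_mul, sum_div]
  refine sum_congr rfl fun k hk => ?_
  obtain ⟨m, rfl⟩ := Nat.exists_eq_add_of_le (Nat.lt_succ_iff.mp (mem_range.mp hk))
  rw [Nat.cast_choose ℝ (Nat.le_add_right k m), Nat.add_sub_cancel_left, pow_add]
  field_simp

lemma abelSeries_pow {a x : ℝ} (ha : 0 ≤ a) (hx : |x| ≤ exp (-1)) (n : ℕ) :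
    abelSeries a x ^ n = abelSeries (n * a) x := by
  induction n with
  | zero => rw [pow_zero, Nat.cast_zero, zero_mul, abelSeries_zero]
  | succ n ih =>
    rw [pow_succ, ih, abelSeries_mul (by positivity) ha hx, Nat.cast_succ, add_one_mul]

lemma abelCoeff_eq_mul_zpow {a : ℝ} (ha : a ≠ 0) (k : ℕ) :
    abelCoeff a k = a * (k + a) ^ ((k : ℤ) - 1) := by
  cases k with
  | zero => simp [abelCoeff, ha]
  | succ k => rw [abelCoeff]; push_cast; rw [add_sub_cancel_right, zpow_natCast]; ring

theorem series_pow_identity (p q : ℕ) (hp : 0 < p) (hq : 0 < q)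
    (x : ℝ) (hx0 : 0 ≤ x) (hx1 : x ≤ 1 / Real.exp 1) :
    (∑' k : ℕ, ((k : ℝ) * p + q) ^ ((k : ℤ) - 1) * q * x ^ k /
        (p ^ k * (Nat.factorial k : ℝ))) ^ p
      = (∑' k : ℕ, ((k : ℝ) + 1) ^ ((k : ℤ) - 1) * x ^ k / (Nat.factorial k : ℝ)) ^ q := by
  have hp' : (0 : ℝ) < p := by exact_mod_cast hp
  have hq' : (0 : ℝ) < q := by exact_mod_cast hq
  have hx : |x| ≤ exp (-1) := by rwa [abs_of_nonneg hx0, exp_neg, ← one_div]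
  have hlhs (k : ℕ) : ((k : ℝ) * p + q) ^ ((k : ℤ) - 1) * q * x ^ k / (p ^ k * k !) =
      abelCoeff (q / p) k * x ^ k / k ! := by
    rw [abelCoeff_eq_mul_zpow (by positivity), show (k : ℝ) * p + q = p * (k + q / p) by
      field_simp, mul_zpow, zpow_sub_one₀ hp'.ne', zpow_natCast]
    field_simp
  have hrhs (k : ℕ) : ((k : ℝ) + 1) ^ ((k : ℤ) - 1) * x ^ k / k ! =
      abelCoeff 1 k * x ^ k / k ! := by
    rw [abelCoeff_eq_mul_zpow one_ne_zero, one_mul]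
  calc _ = abelSeries (q / p) x ^ p := by simp_rw [hlhs]; rfl
    _ = abelSeries 1 x ^ q := by
      rw [abelSeries_pow (by positivity) hx, abelSeries_pow zero_le_one hx,
        mul_div_cancel₀ _ hp'.ne', mul_one]
    _ = _ := by simp_rw [hrhs]; rfl
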